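/- Let x₀ > 0 and let q : [0,x₀] → ℝ be nonnegative, monotone increasing and differentiable with q'(x) ≤ (2/15)·q(0) for all x ∈ [0,x₀]. Let z ≥ √(11·q(x₀)), let φ be the Prüfer angle of q at z, let i ≥ 0 be an integer with (i+1)π ≤ z, and let a ≤ b in (0,x₀] satisfy φ(a) = iπ + π/2 and φ(b) = iπ + 3π/2. Then ∫ₐᵇ (q(x)/z)·(sin²φ(x) − φ(x)·sinφ(x)·cosφ(x)) dx − 2·∫ₐᵇ (q(x)/z)·sinφ(x)·cosφ(x)·( ∫ₐˣ (q(s)/z)·sin²φ(s) ds ) dx ≥ 0. -/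

import Mathlib

/-!
Put `ψ = φ - (i + 1)π`. On `[a, b]` it increases from `-π/2` to `π/2` with speed
`ψ' = z - (q/z) sin² ψ ∈ [10z/11, z]`, while `sin² φ = sin² ψ` and
`sin φ cos φ = sin ψ cos ψ`.
Bounding each integrand by `g(ψ) ψ'` (or from below) turns the integrals over `[a, b]` into
explicit integrals of `g` over `[-π/2, π/2]`:
* `∫ (q/z) sin² ψ ≥ (q a / z²) π/2` and `∫ (q/z) ψ sin ψ cos ψ ≤ (q b / z²) 17π/64`;
* `sin ψ cos ψ` is negative before `ψ = 0` and positive after it, so the double integral is at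
  most `(11/20)(q b / z²) ∫ (q/z) sin² ψ`;
* `∫ (q/z) sin ψ cos ψ` would vanish for constant `q`; it is `O((q b - q a)/z²)`, and
  `q b - q a ≤ (7π/50) q a / z` because `q' ≤ (2/15) q 0` and `b - a ≤ 21π/(20z)`.
As `q b / z² ≤ 1/11` and `q b ≤ (57/50) q a`, the positive term `∫ (q/z) sin² ψ` dominates.
-/

open Real Set MeasureTheory

lemma mul_le_max_mul {s w W : ℝ} (hw : 0 ≤ w) (hwW : w ≤ W) : s * w ≤ max s 0 * W :=
  calc s * w ≤ max s 0 * w := by gcongr; exact le_max_left s 0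
    _ ≤ max s 0 * W := by gcongr

lemma sub_le_mul_sub_of_hasDerivAt_le {f f' : ℝ → ℝ} {a b C : ℝ} (hab : a ≤ b)
    (hf : ∀ x ∈ Icc a b, HasDerivAt f (f' x) x) (hC : ∀ x ∈ Icc a b, f' x ≤ C) :
    f b - f a ≤ C * (b - a) := by
  refine (convex_Icc a b).image_sub_le_mul_sub_of_deriv_le
    (fun x hx => (hf x hx).continuousAt.continuousWithinAt)
    (fun x hx => (hf x (interior_subset hx)).differentiableAt.differentiableWithinAt)
    (fun x hx => ?_) a (left_mem_Icc.2 hab) b (right_mem_Icc.2 hab) hab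
  rw [(hf x (interior_subset hx)).deriv]
  exact hC x (interior_subset hx)

lemma mul_sin_mul_cos_nonneg {u : ℝ} (hu : u ∈ Icc (-(π / 2)) (π / 2)) :
    0 ≤ u * (sin u * cos u) := by
  have hcos : 0 ≤ cos u := cos_nonneg_of_mem_Icc hu
  rcases le_total u 0 with hu0 | hu0
  · have : sin u ≤ 0 := sin_nonpos_of_nonpos_of_neg_pi_le hu0 (by linarith [pi_pos, hu.1])
    nlinarith [mul_nonneg_of_nonpos_of_nonpos hu0 this]
  · have : 0 ≤ sin u := sin_nonneg_of_nonneg_of_le_pi hu0 (by linarith [pi_pos, hu.2])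
    positivity

lemma sin_sq_add_nat_mul_pi (x : ℝ) (n : ℕ) : sin (x + n * π) ^ 2 = sin x ^ 2 := by
  rw [sin_add_nat_mul_pi, mul_pow, ← pow_mul, pow_mul', neg_one_sq, one_pow, one_mul]

lemma sin_mul_cos_add_nat_mul_pi (x : ℝ) (n : ℕ) :
    sin (x + n * π) * cos (x + n * π) = sin x * cos x := by
  rw [sin_add_nat_mul_pi, cos_add_nat_mul_pi, mul_mul_mul_comm, ← pow_add, ← two_mul, pow_mul,
    neg_one_sq, one_pow, one_mul]

theorem Function.Odd.intervalIntegral_eq_zero {f : ℝ → ℝ} (hf : f.Odd) (c : ℝ) :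
    ∫ u in -c..c, f u = 0 := by
  have h := intervalIntegral.integral_comp_neg (a := -c) (b := c) f
  simp only [hf _, intervalIntegral.integral_neg, neg_neg] at h
  linarith

lemma integral_sin_sq_neg_pi_div_two_pi_div_two :
    ∫ u in -(π / 2)..π / 2, sin u ^ 2 = π / 2 := by
  simp

lemma integral_sin_pow_four_neg_pi_div_two_pi_div_two :
    ∫ u in -(π / 2)..π / 2, sin u ^ 4 = 3 * π / 8 := by
  rw [integral_sin_pow (n := 2)]; simp; ring

lemma integral_one_add_sin_sq_div_ten :
    ∫ u in -(π / 2)..π / 2, (1 + sin u ^ 2 / 10) = 21 * π / 20 := by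
  rw [intervalIntegral.integral_add (by simp) (by apply Continuous.intervalIntegrable; fun_prop),
    intervalIntegral.integral_div, integral_sin_sq_neg_pi_div_two_pi_div_two]
  simp; ring

lemma integral_mul_sin_mul_cos_mul_one_add_sin_sq_div_ten :
    ∫ u in -(π / 2)..π / 2, u * (sin u * cos u) * (1 + sin u ^ 2 / 10) = 17 * π / 64 := by
  simp only [mul_assoc]
  have hv : ∀ u ∈ uIcc (-(π / 2)) (π / 2), HasDerivAt (fun v => sin v ^ 2 / 2 + sin v ^ 4 / 40)
      (sin u * (cos u * (1 + sin u ^ 2 / 10))) u := fun u _ => by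
    refine ((((hasDerivAt_sin u).pow 2).div_const 2).add
      (((hasDerivAt_sin u).pow 4).div_const 40)).congr_deriv ?_
    push_cast; ring
  rw [intervalIntegral.integral_mul_deriv_eq_deriv_mul (fun u _ => hasDerivAt_id' u) hv
    (by simp) (by apply Continuous.intervalIntegrable; fun_prop)]
  simp only [one_mul]
  rw [intervalIntegral.integral_add (by apply Continuous.intervalIntegrable; fun_prop)
      (by apply Continuous.intervalIntegrable; fun_prop),
    intervalIntegral.integral_div, intervalIntegral.integral_div,
    integral_sin_sq_neg_pi_div_two_pi_div_two, integral_sin_pow_four_neg_pi_div_two_pi_div_two]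
  simp; ring

lemma integral_max_sin_mul_cos_zero :
    ∫ u in -(π / 2)..π / 2, max (sin u * cos u) 0 = 1 / 2 := by
  have hc : Continuous fun u => max (sin u * cos u) 0 := by fun_prop
  rw [← intervalIntegral.integral_add_adjacent_intervals (b := 0)
    (hc.intervalIntegrable _ _) (hc.intervalIntegrable _ _)]
  have hneg : EqOn (fun u => max (sin u * cos u) 0) 0 (uIcc (-(π / 2)) 0) := by
    intro u hu
    rw [uIcc_of_le (by linarith [pi_pos])] at hu
    refine max_eq_right (mul_nonpos_of_nonpos_of_nonneg ?_ ?_)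
    · exact sin_nonpos_of_nonpos_of_neg_pi_le hu.2 (by linarith [pi_pos, hu.1])
    · exact cos_nonneg_of_mem_Icc ⟨hu.1, by linarith [pi_pos, hu.2]⟩
  have hpos : EqOn (fun u => max (sin u * cos u) 0) (fun u => sin u * cos u) (uIcc 0 (π / 2)) := by
    intro u hu
    rw [uIcc_of_le (by linarith [pi_pos])] at hu
    refine max_eq_left (mul_nonneg ?_ ?_)
    · exact sin_nonneg_of_nonneg_of_le_pi hu.1 (by linarith [pi_pos, hu.2])
    · exact cos_nonneg_of_mem_Icc ⟨by linarith [pi_pos, hu.1], hu.2⟩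
  rw [intervalIntegral.integral_congr hneg, intervalIntegral.integral_congr hpos]
  simp

noncomputable def pruferRHS (q : ℝ → ℝ) (z : ℝ) (ψ : ℝ → ℝ) (x : ℝ) : ℝ :=
  z - q x / z * sin (ψ x) ^ 2

/-- `ψ` is the Prüfer angle shifted by a multiple of `π`, so that the half period `[a, b]`
is swept from `-π/2` to `π/2`. -/
structure PruferHalfTurn (q : ℝ → ℝ) (z : ℝ) (ψ : ℝ → ℝ) (a b : ℝ) : Prop where
  le : a ≤ b
  pos : 0 < z
  nonneg : 0 ≤ q a
  monotoneOn_q : MonotoneOn q (Icc a b)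
  continuousOn_q : ContinuousOn q (Icc a b)
  eleven_mul_le_sq : 11 * q b ≤ z ^ 2
  hasDerivAt : ∀ x ∈ Icc a b, HasDerivAt ψ (pruferRHS q z ψ x) x
  left_eq : ψ a = -(π / 2)
  right_eq : ψ b = π / 2

namespace PruferHalfTurn

variable {q ψ : ℝ → ℝ} {z a b x : ℝ}

lemma q_left_le (h : PruferHalfTurn q z ψ a b) (hx : x ∈ Icc a b) : q a ≤ q x :=
  h.monotoneOn_q (left_mem_Icc.2 h.le) hx hx.1

lemma q_le_right (h : PruferHalfTurn q z ψ a b) (hx : x ∈ Icc a b) : q x ≤ q b :=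
  h.monotoneOn_q hx (right_mem_Icc.2 h.le) hx.2

lemma q_nonneg (h : PruferHalfTurn q z ψ a b) (hx : x ∈ Icc a b) : 0 ≤ q x :=
  h.nonneg.trans (h.q_left_le hx)

lemma q_div_sq_le (h : PruferHalfTurn q z ψ a b) (hx : x ∈ Icc a b) :
    q x / z ^ 2 ≤ 1 / 11 := by
  rw [div_le_div_iff₀ (by have := h.pos; positivity) (by norm_num)]
  linarith [h.q_le_right hx, h.eleven_mul_le_sq]

lemma q_div_mul_sin_sq_le (h : PruferHalfTurn q z ψ a b) (hx : x ∈ Icc a b) (u : ℝ) :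
    q x / z * sin u ^ 2 ≤ z / 11 := by
  have hz := h.pos
  have : q x / z ≤ z / 11 := by
    rw [div_le_div_iff₀ hz (by norm_num)]
    nlinarith [h.q_le_right hx, h.eleven_mul_le_sq]
  nlinarith [sin_sq_le_one u, sq_nonneg (sin u), div_nonneg (h.q_nonneg hx) hz.le]

lemma rhs_le (h : PruferHalfTurn q z ψ a b) (hx : x ∈ Icc a b) : pruferRHS q z ψ x ≤ z := by
  have := div_nonneg (h.q_nonneg hx) h.pos.le
  unfold pruferRHS
  nlinarith [sq_nonneg (sin (ψ x))]

lemma ten_div_eleven_mul_le_rhs (h : PruferHalfTurn q z ψ a b) (hx : x ∈ Icc a b) :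
    10 / 11 * z ≤ pruferRHS q z ψ x := by
  unfold pruferRHS
  linarith [h.q_div_mul_sin_sq_le hx (ψ x)]

lemma rhs_pos (h : PruferHalfTurn q z ψ a b) (hx : x ∈ Icc a b) : 0 < pruferRHS q z ψ x :=
  lt_of_lt_of_le (by linarith [h.pos]) (h.ten_div_eleven_mul_le_rhs hx)

lemma le_mul_rhs (h : PruferHalfTurn q z ψ a b) (hx : x ∈ Icc a b) {W : ℝ} (hW : 0 ≤ W) :
    W ≤ 11 * W / (10 * z) * pruferRHS q z ψ x := by
  have hz := h.pos
  calc W = 11 * W / (10 * z) * (10 / 11 * z) := by field_simp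
    _ ≤ 11 * W / (10 * z) * pruferRHS q z ψ x := by gcongr; exact h.ten_div_eleven_mul_le_rhs hx

lemma le_one_add_mul_rhs (h : PruferHalfTurn q z ψ a b) (hx : x ∈ Icc a b) :
    z ≤ (1 + sin (ψ x) ^ 2 / 10) * pruferRHS q z ψ x := by
  have hz := h.pos
  have hq := h.q_nonneg hx
  have h11 : 11 * q x ≤ z ^ 2 := by linarith [h.q_le_right hx, h.eleven_mul_le_sq]
  have hs := sin_sq_le_one (ψ x)
  have key : (1 + sin (ψ x) ^ 2 / 10) * pruferRHS q z ψ x - z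
      = sin (ψ x) ^ 2 / (10 * z) * (z ^ 2 - 10 * q x - q x * sin (ψ x) ^ 2) := by
    unfold pruferRHS; field_simp; ring
  have : 0 ≤ sin (ψ x) ^ 2 / (10 * z) * (z ^ 2 - 10 * q x - q x * sin (ψ x) ^ 2) :=
    mul_nonneg (by positivity) (by nlinarith)
  linarith

lemma continuousOn (h : PruferHalfTurn q z ψ a b) : ContinuousOn ψ (Icc a b) :=
  fun x hx => (h.hasDerivAt x hx).continuousAt.continuousWithinAt

lemma continuousOn_rhs (h : PruferHalfTurn q z ψ a b) :
    ContinuousOn (pruferRHS q z ψ) (Icc a b) :=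
  continuousOn_const.sub ((h.continuousOn_q.div_const z).mul
    ((continuous_sin.comp_continuousOn h.continuousOn).pow 2))

lemma monotoneOn (h : PruferHalfTurn q z ψ a b) : MonotoneOn ψ (Icc a b) := by
  refine monotoneOn_of_deriv_nonneg (convex_Icc a b) h.continuousOn
    (fun x hx => (h.hasDerivAt x (interior_subset hx)).differentiableAt.differentiableWithinAt)
    (fun x hx => ?_)
  rw [(h.hasDerivAt x (interior_subset hx)).deriv]
  exact (h.rhs_pos (interior_subset hx)).le

lemma mem_Icc (h : PruferHalfTurn q z ψ a b) (hx : x ∈ Icc a b) :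
    ψ x ∈ Icc (-(π / 2)) (π / 2) := by
  rw [← h.left_eq, ← h.right_eq]
  exact ⟨h.monotoneOn (left_mem_Icc.2 h.le) hx hx.1,
    h.monotoneOn hx (right_mem_Icc.2 h.le) hx.2⟩

lemma integral_comp_mul_rhs (h : PruferHalfTurn q z ψ a b) {g : ℝ → ℝ} (hg : Continuous g) :
    ∫ x in a..b, g (ψ x) * pruferRHS q z ψ x = ∫ u in -(π / 2)..π / 2, g u := by
  rw [← h.left_eq, ← h.right_eq, ← intervalIntegral.integral_comp_mul_deriv _ _ hg]
  · rfl
  · rw [uIcc_of_le h.le]; exact h.hasDerivAt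
  · rw [uIcc_of_le h.le]; exact h.continuousOn_rhs

lemma intervalIntegrable_comp_mul_rhs (h : PruferHalfTurn q z ψ a b) {g : ℝ → ℝ}
    (hg : Continuous g) :
    IntervalIntegrable (fun x => g (ψ x) * pruferRHS q z ψ x) volume a b :=
  ((hg.comp_continuousOn h.continuousOn).mul h.continuousOn_rhs).intervalIntegrable_of_Icc h.le

lemma integral_le (h : PruferHalfTurn q z ψ a b) {f g : ℝ → ℝ}
    (hf : IntervalIntegrable f volume a b) (hg : Continuous g)
    (hfg : ∀ x ∈ Icc a b, f x ≤ g (ψ x) * pruferRHS q z ψ x) :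
    ∫ x in a..b, f x ≤ ∫ u in -(π / 2)..π / 2, g u := by
  rw [← h.integral_comp_mul_rhs hg]
  exact intervalIntegral.integral_mono_on h.le hf (h.intervalIntegrable_comp_mul_rhs hg) hfg

lemma le_integral (h : PruferHalfTurn q z ψ a b) {f g : ℝ → ℝ}
    (hf : IntervalIntegrable f volume a b) (hg : Continuous g)
    (hfg : ∀ x ∈ Icc a b, g (ψ x) * pruferRHS q z ψ x ≤ f x) :
    ∫ u in -(π / 2)..π / 2, g u ≤ ∫ x in a..b, f x := by
  rw [← h.integral_comp_mul_rhs hg]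
  exact intervalIntegral.integral_mono_on h.le (h.intervalIntegrable_comp_mul_rhs hg) hf hfg

lemma intervalIntegrable_q_div_mul_comp (h : PruferHalfTurn q z ψ a b) {g : ℝ → ℝ}
    (hg : Continuous g) : IntervalIntegrable (fun x => q x / z * g (ψ x)) volume a b :=
  ((h.continuousOn_q.div_const z).mul (hg.comp_continuousOn h.continuousOn)
    ).intervalIntegrable_of_Icc h.le


lemma length_le (h : PruferHalfTurn q z ψ a b) : b - a ≤ 21 * π / (20 * z) := by
  have hz := h.pos
  have key := h.integral_le (f := fun _ => 1) (g := fun u => (1 + sin u ^ 2 / 10) / z)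
    intervalIntegrable_const (by fun_prop) fun x hx => by
      rw [div_mul_eq_mul_div, le_div_iff₀ hz, one_mul]
      exact h.le_one_add_mul_rhs hx
  rw [intervalIntegral.integral_div, integral_one_add_sin_sq_div_ten] at key
  simpa [div_div, mul_comm] using key

lemma mul_pi_div_two_le_integral (h : PruferHalfTurn q z ψ a b) :
    q a / z ^ 2 * (π / 2) ≤ ∫ x in a..b, q x / z * sin (ψ x) ^ 2 := by
  have hz := h.pos
  rw [← integral_sin_sq_neg_pi_div_two_pi_div_two, ← intervalIntegral.integral_const_mul]
  refine h.le_integral (h.intervalIntegrable_q_div_mul_comp (g := (sin · ^ 2)) (by fun_prop))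
    (by fun_prop) fun x hx => ?_
  have := h.nonneg
  calc q a / z ^ 2 * sin (ψ x) ^ 2 * pruferRHS q z ψ x
      ≤ q a / z ^ 2 * sin (ψ x) ^ 2 * z := by gcongr; exact h.rhs_le hx
    _ = q a / z * sin (ψ x) ^ 2 := by field_simp
    _ ≤ q x / z * sin (ψ x) ^ 2 := by gcongr; exact h.q_left_le hx

lemma integral_q_div_mul_comp_le (h : PruferHalfTurn q z ψ a b) {g : ℝ → ℝ}
    (hg : Continuous g) (hg0 : ∀ u ∈ Icc (-(π / 2)) (π / 2), 0 ≤ g u) :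
    ∫ x in a..b, q x / z * g (ψ x)
      ≤ q b / z ^ 2 * ∫ u in -(π / 2)..π / 2, g u * (1 + sin u ^ 2 / 10) := by
  have hz := h.pos
  rw [← intervalIntegral.integral_const_mul]
  refine h.integral_le (h.intervalIntegrable_q_div_mul_comp hg) (by fun_prop) fun x hx => ?_
  have hgx := hg0 _ (h.mem_Icc hx)
  have hqb : 0 ≤ q b := h.q_nonneg (right_mem_Icc.2 h.le)
  calc q x / z * g (ψ x) ≤ q b / z * g (ψ x) := by gcongr; exact h.q_le_right hx
    _ = q b / z ^ 2 * (g (ψ x) * z) := by field_simp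
    _ ≤ q b / z ^ 2 * (g (ψ x) * ((1 + sin (ψ x) ^ 2 / 10) * pruferRHS q z ψ x)) := by
        gcongr; exact h.le_one_add_mul_rhs hx
    _ = _ := by ring

lemma integral_le_of_le_odd_add_max (h : PruferHalfTurn q z ψ a b) {f g : ℝ → ℝ} {C : ℝ}
    (hf : IntervalIntegrable f volume a b) (hg : Continuous g) (hodd : g.Odd)
    (hfg : ∀ x ∈ Icc a b,
      f x ≤ (g (ψ x) + C * max (sin (ψ x) * cos (ψ x)) 0) * pruferRHS q z ψ x) :
    ∫ x in a..b, f x ≤ C / 2 := by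
  refine (h.integral_le (g := fun u => g u + C * max (sin u * cos u) 0) hf (by fun_prop) hfg
    ).trans_eq ?_
  rw [intervalIntegral.integral_add (hg.intervalIntegrable _ _)
      (by apply Continuous.intervalIntegrable; fun_prop),
    hodd.intervalIntegral_eq_zero, intervalIntegral.integral_const_mul,
    integral_max_sin_mul_cos_zero]
  ring

/-- The part `q a / z · sin ψ cos ψ / (z - q a / z · sin² ψ) · ψ'` of the integrand is odd
in `ψ`, so only the growth `q x - q a` of the potential contributes. -/
lemma integral_q_div_mul_sin_mul_cos_le (h : PruferHalfTurn q z ψ a b) :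
    ∫ x in a..b, q x / z * (sin (ψ x) * cos (ψ x)) ≤ 121 / 200 * ((q b - q a) / z ^ 2) := by
  have hz := h.pos
  have ha := left_mem_Icc.2 h.le
  set D : ℝ → ℝ := fun u => z - q a / z * sin u ^ 2
  have hD_ge : ∀ u, 10 / 11 * z ≤ D u := fun u => by linarith [h.q_div_mul_sin_sq_le ha u]
  have hD_pos : ∀ u, 0 < D u := fun u => lt_of_lt_of_le (by positivity) (hD_ge u)
  set g : ℝ → ℝ := fun u => q a / z * (sin u * cos u) / D u
  have hg : Continuous g := by
    exact Continuous.div (by fun_prop) (by fun_prop) fun u => (hD_pos u).ne'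
  have hodd : g.Odd := fun u => by simp [g, D, neg_div]
  have hsplit : ∀ x ∈ Icc a b, q x / z * (sin (ψ x) * cos (ψ x))
      = g (ψ x) * pruferRHS q z ψ x + sin (ψ x) * cos (ψ x) * ((q x - q a) / D (ψ x)) := by
    intro x _
    have hDx := (hD_pos (ψ x)).ne'
    have key : q a / z * pruferRHS q z ψ x + (q x - q a) = q x / z * D (ψ x) := by
      simp only [D, pruferRHS]; field_simp; ring
    calc q x / z * (sin (ψ x) * cos (ψ x))
        = sin (ψ x) * cos (ψ x) * (q x / z * D (ψ x)) / D (ψ x) := by field_simp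
      _ = _ := by rw [← key]; simp only [g]; ring
  have hW : 0 ≤ 11 * (q b - q a) / (10 * z) := by
    have := h.q_left_le (right_mem_Icc.2 h.le); positivity
  refine (h.integral_le_of_le_odd_add_max (C := 11 * (11 * (q b - q a) / (10 * z)) / (10 * z))
    ?_ hg hodd fun x hx => ?_).trans_eq (by field_simp; ring)
  · exact h.intervalIntegrable_q_div_mul_comp (g := fun u => sin u * cos u) (by fun_prop)
  · have hw : (q x - q a) / D (ψ x) ≤ 11 * (q b - q a) / (10 * z) := by
      rw [div_le_div_iff₀ (hD_pos _) (by positivity)]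
      have := h.q_le_right hx
      have := h.q_left_le hx
      nlinarith [hD_ge (ψ x)]
    rw [hsplit x hx, add_mul]
    gcongr g (ψ x) * pruferRHS q z ψ x + ?_
    calc sin (ψ x) * cos (ψ x) * ((q x - q a) / D (ψ x))
        ≤ max (sin (ψ x) * cos (ψ x)) 0 * (11 * (q b - q a) / (10 * z)) :=
          mul_le_max_mul (div_nonneg (by linarith [h.q_left_le hx]) (hD_pos _).le) hw
      _ ≤ max (sin (ψ x) * cos (ψ x)) 0
            * (11 * (11 * (q b - q a) / (10 * z)) / (10 * z) * pruferRHS q z ψ x) := by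
          gcongr; exact h.le_mul_rhs hx hW
      _ = _ := by ring

lemma integral_mul_integral_le (h : PruferHalfTurn q z ψ a b) :
    ∫ x in a..b, q x / z * (sin (ψ x) * cos (ψ x)) * ∫ s in a..x, q s / z * sin (ψ s) ^ 2
      ≤ 11 / 20 * (q b / z ^ 2) * ∫ x in a..b, q x / z * sin (ψ x) ^ 2 := by
  have hz := h.pos
  set F : ℝ → ℝ := fun x => q x / z * sin (ψ x) ^ 2
  have hF : ContinuousOn F (Icc a b) :=
    (h.continuousOn_q.div_const z).mul ((continuous_sin.comp_continuousOn h.continuousOn).pow 2)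
  have hF0 : ∀ x ∈ Icc a b, 0 ≤ F x := fun x hx => by have := h.q_nonneg hx; positivity
  have hG : ContinuousOn (fun x => ∫ s in a..x, F s) (Icc a b) := by
    simpa only [uIcc_of_le h.le] using intervalIntegral.continuousOn_primitive_interval
      (hF.integrableOn_Icc.mono_set (uIcc_of_le h.le).subset)
  have hG0 : ∀ x ∈ Icc a b, 0 ≤ ∫ s in a..x, F s := fun x hx =>
    intervalIntegral.integral_nonneg hx.1 fun s hs => hF0 s ⟨hs.1, hs.2.trans hx.2⟩
  have hGb : ∀ x ∈ Icc a b, ∫ s in a..x, F s ≤ ∫ s in a..b, F s := fun x hx =>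
    intervalIntegral.integral_mono_interval le_rfl hx.1 hx.2
      ((ae_restrict_iff' measurableSet_Ioc).2 (ae_of_all _ fun s hs => hF0 s ⟨hs.1.le, hs.2⟩))
      (hF.intervalIntegrable_of_Icc h.le)
  have hW : 0 ≤ q b / z * ∫ s in a..b, F s := by
    have := h.q_nonneg (right_mem_Icc.2 h.le)
    have := hG0 b (right_mem_Icc.2 h.le)
    positivity
  refine (h.integral_le_of_le_odd_add_max (g := fun _ => 0)
    (C := 11 * (q b / z * ∫ s in a..b, F s) / (10 * z)) ?_ continuous_const (fun _ => by simp)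
    fun x hx => ?_).trans_eq (by field_simp; ring)
  · have := h.continuousOn_q
    have := h.continuousOn
    exact ContinuousOn.intervalIntegrable_of_Icc h.le (by fun_prop)
  · have hq := h.q_nonneg hx
    calc q x / z * (sin (ψ x) * cos (ψ x)) * ∫ s in a..x, F s
        = sin (ψ x) * cos (ψ x) * (q x / z * ∫ s in a..x, F s) := by ring
      _ ≤ max (sin (ψ x) * cos (ψ x)) 0 * (q b / z * ∫ s in a..b, F s) := by
          refine mul_le_max_mul (mul_nonneg (by positivity) (hG0 x hx)) ?_
          exact mul_le_mul (by gcongr; exact h.q_le_right hx) (hGb x hx) (hG0 x hx)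
            (by have := h.q_nonneg (right_mem_Icc.2 h.le); positivity)
      _ ≤ max (sin (ψ x) * cos (ψ x)) 0
            * (11 * (q b / z * ∫ s in a..b, F s) / (10 * z) * pruferRHS q z ψ x) :=
          mul_le_mul_of_nonneg_left (h.le_mul_rhs hx hW) (le_max_right _ _)
      _ = _ := by ring

lemma q_sub_le (h : PruferHalfTurn q z ψ a b) (hq : q b - q a ≤ 2 / 15 * q a * (b - a)) :
    q b - q a ≤ 7 * π / 50 * (q a / z) := by
  have hz := h.pos
  have := h.nonneg
  calc q b - q a ≤ 2 / 15 * q a * (21 * π / (20 * z)) := hq.trans (by gcongr; exact h.length_le)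
    _ = 7 * π / 50 * (q a / z) := by field_simp; ring

lemma mul_integral_q_div_mul_sin_mul_cos_le (h : PruferHalfTurn q z ψ a b)
    (hq : q b - q a ≤ 2 / 15 * q a * (b - a)) {γ : ℝ} (hγ : 0 ≤ γ) (hγz : γ ≤ z) :
    γ * ∫ x in a..b, q x / z * (sin (ψ x) * cos (ψ x))
      ≤ 847 / 10000 * π * (q a / z ^ 2) := by
  have hz := h.pos
  set K := ∫ x in a..b, q x / z * (sin (ψ x) * cos (ψ x))
  have hK := h.integral_q_div_mul_sin_mul_cos_le
  have hzK : z * (121 / 200 * ((q b - q a) / z ^ 2)) ≤ 847 / 10000 * π * (q a / z ^ 2) := by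
    have := h.q_sub_le hq
    calc z * (121 / 200 * ((q b - q a) / z ^ 2)) = 121 / 200 * ((q b - q a) / z) := by
          field_simp
      _ ≤ 121 / 200 * (7 * π / 50 * (q a / z) / z) := by gcongr
      _ = _ := by field_simp; ring
  rcases le_total K 0 with hK0 | hK0
  · have := h.nonneg
    exact (mul_nonpos_of_nonneg_of_nonpos hγ hK0).trans (by positivity)
  · calc γ * K ≤ z * K := by gcongr
      _ ≤ z * (121 / 200 * ((q b - q a) / z ^ 2)) := by gcongr
      _ ≤ _ := hzK

theorem integral_sub_two_mul_integral_nonneg (h : PruferHalfTurn q z ψ a b)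
    (hq : q b - q a ≤ 2 / 15 * q a * (b - a)) {γ : ℝ} (hγ : 0 ≤ γ) (hγz : γ ≤ z)
    (hπz : π ≤ z) :
    0 ≤ (∫ x in a..b, q x / z * (sin (ψ x) ^ 2 - (ψ x + γ) * (sin (ψ x) * cos (ψ x))))
      - 2 * ∫ x in a..b,
          q x / z * (sin (ψ x) * cos (ψ x)) * ∫ s in a..x, q s / z * sin (ψ s) ^ 2 := by
  have hz := h.pos
  have hqa := h.nonneg
  set T := ∫ x in a..b, q x / z * sin (ψ x) ^ 2
  set K := ∫ x in a..b, q x / z * (sin (ψ x) * cos (ψ x))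
  set R := ∫ x in a..b, q x / z * (ψ x * (sin (ψ x) * cos (ψ x)))
  have hsplit : ∫ x in a..b, q x / z * (sin (ψ x) ^ 2 - (ψ x + γ) * (sin (ψ x) * cos (ψ x)))
      = T - γ * K - R := by
    have := h.continuousOn_q
    have := h.continuousOn
    have e : ∀ x, q x / z * (sin (ψ x) ^ 2 - (ψ x + γ) * (sin (ψ x) * cos (ψ x)))
        = q x / z * sin (ψ x) ^ 2 - γ * (q x / z * (sin (ψ x) * cos (ψ x)))
          - q x / z * (ψ x * (sin (ψ x) * cos (ψ x))) := fun x => by ring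
    simp_rw [e]
    rw [intervalIntegral.integral_sub, intervalIntegral.integral_sub,
      intervalIntegral.integral_const_mul]
    all_goals exact ContinuousOn.intervalIntegrable_of_Icc h.le (by fun_prop)
  have hT := h.mul_pi_div_two_le_integral
  have hR : R ≤ q b / z ^ 2 * (17 * π / 64) := by
    rw [← integral_mul_sin_mul_cos_mul_one_add_sin_sq_div_ten]
    exact h.integral_q_div_mul_comp_le (g := fun u => u * (sin u * cos u)) (by fun_prop)
      fun u hu => mul_sin_mul_cos_nonneg hu
  have hγK := h.mul_integral_q_div_mul_sin_mul_cos_le hq hγ hγz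
  have hI := h.integral_mul_integral_le
  set X := q a / z ^ 2
  set Y := q b / z ^ 2
  have hY : Y ≤ 1 / 11 := h.q_div_sq_le (right_mem_Icc.2 h.le)
  have hYX : Y ≤ 57 / 50 * X := by
    have hπ : π * (q a / z) ≤ q a := by
      calc π * (q a / z) ≤ z * (q a / z) := by gcongr
        _ = q a := by field_simp
    have : q b ≤ 57 / 50 * q a := by nlinarith [h.q_sub_le hq]
    simp only [X, Y, ← mul_div_assoc]
    gcongr
  have hX : 0 ≤ X := by positivity
  have hTY : X * (π / 2) * (1 - 11 / 10 * Y) ≤ T * (1 - 11 / 10 * Y) :=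
    mul_le_mul_of_nonneg_right hT (by linarith)
  have hXY : π * (X * Y) ≤ π * (X * (1 / 11)) := by gcongr
  have hπYX : π * Y ≤ π * (57 / 50 * X) := by gcongr
  rw [hsplit]
  nlinarith [pi_pos]

end PruferHalfTurn

theorem combined_half_period_nonneg_general
    (x₀ : ℝ)
    (q q' : ℝ → ℝ)
    (hqnonneg : ∀ x ∈ Icc 0 x₀, 0 ≤ q x)
    (hmono : MonotoneOn q (Icc 0 x₀))
    (hqdiff : ∀ x ∈ Icc 0 x₀, HasDerivAt q (q' x) x)
    (hq'bound : ∀ x ∈ Icc 0 x₀, q' x ≤ (2/15) * q 0)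
    (z : ℝ) (hz : Real.sqrt (11 * q x₀) ≤ z)
    (φ : ℝ → ℝ)
    (hφODE : ∀ x ∈ Icc 0 x₀, HasDerivAt φ (z - q x / z * Real.sin (φ x) ^ 2) x)
    (i : ℕ) (hi : ((i : ℝ) + 1) * π ≤ z)
    (a b : ℝ) (ha : a ∈ Ioc 0 x₀) (hb : b ∈ Ioc 0 x₀) (hab : a ≤ b)
    (hφa : φ a = i * π + π / 2) (hφb : φ b = i * π + 3 * π / 2) :
    (∫ x in a..b, (q x / z) *
        (Real.sin (φ x) ^ 2 - φ x * Real.sin (φ x) * Real.cos (φ x)))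
      - 2 * (∫ x in a..b, (q x / z) * Real.sin (φ x) * Real.cos (φ x) *
          (∫ s in a..x, (q s / z) * Real.sin (φ s) ^ 2)) ≥ 0 := by
  have hsub : Icc a b ⊆ Icc 0 x₀ := Icc_subset_Icc ha.1.le hb.2
  have hγ : (((i + 1 : ℕ) : ℝ) * π) = ((i : ℝ) + 1) * π := by push_cast; ring
  have hπz : π ≤ z := le_trans (by nlinarith [pi_pos, (Nat.cast_nonneg i : (0 : ℝ) ≤ i)]) hi
  obtain ⟨ψ, hφψ⟩ : ∃ ψ : ℝ → ℝ, ∀ x, φ x = ψ x + (i + 1 : ℕ) * π :=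
    ⟨fun x => φ x - (i + 1 : ℕ) * π, fun x => by ring⟩
  have hsq (x : ℝ) : sin (φ x) ^ 2 = sin (ψ x) ^ 2 := by rw [hφψ, sin_sq_add_nat_mul_pi]
  have hsc (x : ℝ) : sin (φ x) * cos (φ x) = sin (ψ x) * cos (ψ x) := by
    rw [hφψ, sin_mul_cos_add_nat_mul_pi]
  have hHT : PruferHalfTurn q z ψ a b :=
    { le := hab
      pos := pi_pos.trans_le hπz
      nonneg := hqnonneg a (hsub (left_mem_Icc.2 hab))
      monotoneOn_q := hmono.mono hsub
      continuousOn_q := fun x hx => (hqdiff x (hsub hx)).continuousAt.continuousWithinAt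
      eleven_mul_le_sq := by
        have h11 := (Real.sqrt_le_left (pi_pos.trans_le hπz).le).1 hz
        linarith [hmono (hsub (right_mem_Icc.2 hab)) ⟨ha.1.le.trans ha.2, le_rfl⟩ hb.2]
      hasDerivAt := fun x hx => by
        have := hφODE x (hsub hx)
        rw [funext hφψ, hasDerivAt_add_const_iff] at this
        simpa only [pruferRHS, ← hsq, funext hφψ] using this
      left_eq := by rw [hφψ, hγ] at hφa; linarith
      right_eq := by rw [hφψ, hγ] at hφb; linarith }
  have hq : q b - q a ≤ 2 / 15 * q a * (b - a) :=
    sub_le_mul_sub_of_hasDerivAt_le hab (fun x hx => hqdiff x (hsub hx)) fun x hx =>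
      (hq'bound x (hsub hx)).trans <| by
        gcongr; exact hmono ⟨le_rfl, ha.1.le.trans ha.2⟩ (hsub (left_mem_Icc.2 hab)) ha.1.le
  have key := hHT.integral_sub_two_mul_integral_nonneg hq (by positivity) (hγ ▸ hi) hπz
  have e₁ (x : ℝ) : q x / z * (sin (φ x) ^ 2 - φ x * sin (φ x) * cos (φ x))
      = q x / z * (sin (ψ x) ^ 2 - (ψ x + (i + 1 : ℕ) * π) * (sin (ψ x) * cos (ψ x))) := by
    rw [mul_assoc (φ x), hsq, hsc, hφψ]
  have e₂ (x : ℝ) :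
      q x / z * sin (φ x) * cos (φ x) = q x / z * (sin (ψ x) * cos (ψ x)) := by
    rw [mul_assoc, hsc]
  simp only [e₁, e₂]
  simpa only [hsq] using key

/-- Key estimate (3.21): nonnegativity of the combined half-period expression for
z ≥ √(11·q(x₀)), when q is increasing with q' ≤ (2/15)·q(0) and (i+1)π ≤ z. -/
theorem combined_half_period_nonneg
    (x₀ : ℝ) (hx₀ : 0 < x₀)
    (q q' : ℝ → ℝ)
    (hqnonneg : ∀ x ∈ Icc 0 x₀, 0 ≤ q x)
    (hmono : MonotoneOn q (Icc 0 x₀))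
    (hqdiff : ∀ x ∈ Icc 0 x₀, HasDerivAt q (q' x) x)
    (hq'bound : ∀ x ∈ Icc 0 x₀, q' x ≤ (2/15) * q 0)
    (z : ℝ) (hz : Real.sqrt (11 * q x₀) ≤ z)
    (φ : ℝ → ℝ) (hφ0 : φ 0 = 0)
    (hφODE : ∀ x ∈ Icc 0 x₀, HasDerivAt φ (z - q x / z * Real.sin (φ x) ^ 2) x)
    (i : ℕ) (hi : ((i : ℝ) + 1) * π ≤ z)
    (a b : ℝ) (ha : a ∈ Ioc 0 x₀) (hb : b ∈ Ioc 0 x₀) (hab : a ≤ b)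
    (hφa : φ a = i * π + π / 2) (hφb : φ b = i * π + 3 * π / 2) :
    (∫ x in a..b, (q x / z) *
        (Real.sin (φ x) ^ 2 - φ x * Real.sin (φ x) * Real.cos (φ x)))
      - 2 * (∫ x in a..b, (q x / z) * Real.sin (φ x) * Real.cos (φ x) *
          (∫ s in a..x, (q s / z) * Real.sin (φ s) ^ 2)) ≥ 0 :=
  combined_half_period_nonneg_general x₀ q q' hqnonneg hmono hqdiff hq'bound z hz φ hφODE i hi a b
    ha hb hab hφa hφb
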